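/- Fix x₀ ∈ ℝ and R > 0. Let u₀ : ℂ → ℂ be complex-differentiable on an open neighborhood of the closed disc {z : |z - x₀| ≤ R} and let c : ℂ → ℂ be entire. Let x ∈ ℝ with |x - x₀| < R and t ∈ ℝ be such that |z - x| > |t·c(u₀(z))| for all z on the circle |z - x₀| = R. Then there is a unique X in the open disc {z : |z - x₀| < R} with X = x - t·c(u₀(X)); if moreover this zero is simple, i.e. 1 + t·c'(u₀(X))·u₀'(X) ≠ 0, then (1/(2πi)) ∮_{|z-x₀|=R} (1 + t·c'(u₀(z))·u₀'(z)) · u₀(z) / (z - x + t·c(u₀(z))) dz = u₀(X). -/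

import Mathlib

open Complex Metric Topology Filter


lemma diff_linprod (l : List ℂ) :
    Differentiable ℂ (fun z : ℂ => (l.map (fun w => z - w)).prod) := by
  induction l with
  | nil => simpa using (differentiable_const (1 : ℂ))
  | cons a l ih =>
      simp only [List.map_cons, List.prod_cons]
      exact (differentiable_id.sub_const a).mul ih

lemma circleIntegral_add' {f g : ℂ → ℂ} {c : ℂ} {R : ℝ}
    (hf : CircleIntegrable f c R) (hg : CircleIntegrable g c R) :
    (∮ z in C(c, R), (f z + g z)) = (∮ z in C(c, R), f z) + ∮ z in C(c, R), g z := by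
  simp only [circleIntegral, smul_add]
  exact intervalIntegral.integral_add hf.out hg.out

lemma keyInt (c₀ : ℂ) (R R' : ℝ) (hR : 0 < R) (hRR' : R < R')
    (h q : ℂ → ℂ)
    (hh : DifferentiableOn ℂ h (ball c₀ R'))
    (hq : DifferentiableOn ℂ q (ball c₀ R'))
    (hh0 : ∀ z ∈ closedBall c₀ R, h z ≠ 0) :
    ∀ l : List ℂ, (∀ w ∈ l, w ∈ ball c₀ R) →
    (∮ z in C(c₀, R),
        deriv (fun z => (l.map (fun w => z - w)).prod * h z) z * q z /
          ((l.map (fun w => z - w)).prod * h z))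
      = (2 * Real.pi * I) * (l.map q).sum := by
  have hsub : closedBall c₀ R ⊆ ball c₀ R' := closedBall_subset_ball hRR'
  have hsph : sphere c₀ R ⊆ ball c₀ R' := sphere_subset_closedBall.trans hsub
  intro l
  induction l with
  | nil =>
      intro _
      simp only [List.map_nil, List.prod_nil, one_mul, List.sum_nil, mul_zero]
      set W : Set ℂ := ball c₀ R' ∩ h ⁻¹' {(0:ℂ)}ᶜ with hW
      have hWopen : IsOpen W :=
        hh.continuousOn.isOpen_inter_preimage isOpen_ball (isOpen_compl_singleton)
      have hWsub : closedBall c₀ R ⊆ W := fun z hz => ⟨hsub hz, hh0 z hz⟩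
      have hdiff : DifferentiableOn ℂ (fun z => deriv h z * q z / h z) W := by
        have h1 : DifferentiableOn ℂ (deriv h) (ball c₀ R') :=
          ((hh.analyticOnNhd isOpen_ball).deriv).differentiableOn
        exact (((h1.mono Set.inter_subset_left).mul (hq.mono Set.inter_subset_left)).div
          (hh.mono Set.inter_subset_left)) (fun z hz => hz.2)
      apply circleIntegral_eq_zero_of_differentiable_on_off_countable hR.le Set.countable_empty
      · exact (hdiff.continuousOn).mono hWsub
      · intro z hz
        exact hdiff.differentiableAt (hWopen.mem_nhds (hWsub (ball_subset_closedBall hz.1)))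
  | cons w L ih =>
      intro hwL
      have hw : w ∈ ball c₀ R := hwL w List.mem_cons_self
      have hL : ∀ v ∈ L, v ∈ ball c₀ R := fun v hv => hwL v (List.mem_cons_of_mem _ hv)
      set P' : ℂ → ℂ := fun z => (L.map (fun v => z - v)).prod * h z with hP'
      have hP'diff : DifferentiableOn ℂ P' (ball c₀ R') :=
        ((diff_linprod L).differentiableOn).mul hh
      have hP'ne : ∀ z ∈ sphere c₀ R, P' z ≠ 0 := by
        intro z hz
        apply mul_ne_zero
        · apply List.prod_ne_zero
          intro h0
          obtain ⟨v, hv, hv0⟩ := List.mem_map.mp h0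
          have hzv : z = v := sub_eq_zero.mp hv0
          have h1 : dist z c₀ = R := mem_sphere.mp hz
          have h2 : dist v c₀ < R := mem_ball.mp (hL v hv)
          rw [hzv] at h1; linarith
        · exact hh0 z (sphere_subset_closedBall hz)
      have hne : ∀ z ∈ sphere c₀ R, z - w ≠ 0 := by
        intro z hz
        intro h0
        have hzv : z = w := sub_eq_zero.mp h0
        have h1 : dist z c₀ = R := mem_sphere.mp hz
        have h2 : dist w c₀ < R := mem_ball.mp hw
        rw [hzv] at h1; linarith
      have hqc : ContinuousOn q (sphere c₀ R) := hq.continuousOn.mono hsph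
      have hP'c : ContinuousOn P' (sphere c₀ R) := hP'diff.continuousOn.mono hsph
      have hdP'c : ContinuousOn (deriv P') (sphere c₀ R) :=
        ((hP'diff.analyticOnNhd isOpen_ball).deriv.differentiableOn.continuousOn).mono hsph
      have heq : Set.EqOn
          (fun z => deriv (fun z => ((w :: L).map (fun v => z - v)).prod * h z) z * q z /
            (((w :: L).map (fun v => z - v)).prod * h z))
          (fun z => (z - w)⁻¹ • q z + deriv P' z * q z / P' z) (sphere c₀ R) := by
        intro z hz
        have hzw : z - w ≠ 0 := hne z hz
        have hP'z : P' z ≠ 0 := hP'ne z hz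
        have hzV : z ∈ ball c₀ R' := hsph hz
        simp only [List.map_cons, List.prod_cons, mul_assoc]
        have hder : deriv (fun z => (z - w) * P' z) z = P' z + (z - w) * deriv P' z := by
          rw [deriv_fun_mul ((differentiableAt_fun_id.sub_const w))
            (hP'diff.differentiableAt (isOpen_ball.mem_nhds hzV))]
          simp only [deriv_sub_const, deriv_id'']
          ring
        rw [show (fun z => (z - w) * ((List.map (fun v => z - v) L).prod * h z))
            = fun z => (z - w) * P' z from rfl, hder]
        show (P' z + (z - w) * deriv P' z) * q z / ((z - w) * P' z)
            = (z - w)⁻¹ • q z + deriv P' z * q z / P' z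
        rw [smul_eq_mul]
        field_simp
      have hi1 : CircleIntegrable (fun z => (z - w)⁻¹ • q z) c₀ R :=
        ContinuousOn.circleIntegrable hR.le
          ((((continuousOn_id.sub continuousOn_const).inv₀ hne).smul hqc))
      have hi2 : CircleIntegrable (fun z => deriv P' z * q z / P' z) c₀ R :=
        ContinuousOn.circleIntegrable hR.le ((hdP'c.mul hqc).div hP'c hP'ne)
      rw [circleIntegral.integral_congr hR.le heq,
        circleIntegral_add' hi1 hi2, ih hL,
        DifferentiableOn.circleIntegral_sub_inv_smul (hq.mono hsub) hw]
      simp only [List.map_cons, List.sum_cons, smul_eq_mul]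
      ring

noncomputable def AnalyticAt.order {g : ℂ → ℂ} {w : ℂ} (_ : AnalyticAt ℂ g w) : ℕ∞ :=
  analyticOrderAt g w

lemma AnalyticAt.order_eq_top_iff {g : ℂ → ℂ} {w : ℂ} (hA : AnalyticAt ℂ g w) :
    hA.order = ⊤ ↔ ∀ᶠ z in 𝓝 w, g z = 0 := analyticOrderAt_eq_top

lemma AnalyticAt.order_eq_nat_iff {g : ℂ → ℂ} {w : ℂ} (hA : AnalyticAt ℂ g w) (n : ℕ) :
    hA.order = n ↔ ∃ φ : ℂ → ℂ, AnalyticAt ℂ φ w ∧ φ w ≠ 0 ∧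
      ∀ᶠ z in 𝓝 w, g z = (z - w) ^ n • φ z := hA.analyticOrderAt_eq_natCast

open scoped Topology Filter in
open Classical in
noncomputable def ordN (g : ℂ → ℂ) (w : ℂ) : ℕ :=
  if h : AnalyticAt ℂ g w then h.order.toNat else 0

def Zset (c₀ : ℂ) (R : ℝ) (g : ℂ → ℂ) : Set ℂ := {z | z ∈ closedBall c₀ R ∧ g z = 0}

lemma sphere_pt (c₀ : ℂ) {R : ℝ} (hR : 0 < R) : c₀ + (R : ℂ) ∈ sphere c₀ R := by
  simp [Complex.dist_eq, abs_of_pos hR]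

lemma not_eqOn_zero (c₀ : ℂ) {R R' : ℝ} (hR : 0 < R) (hRR' : R < R') {g : ℂ → ℂ}
    (hsph : ∀ z ∈ sphere c₀ R, g z ≠ 0) : ¬ Set.EqOn g 0 (ball c₀ R') := by
  intro hEq
  have hmem : c₀ + (R : ℂ) ∈ sphere c₀ R := sphere_pt c₀ hR
  have : c₀ + (R : ℂ) ∈ ball c₀ R' := by
    have := mem_sphere.mp hmem
    exact mem_ball.mpr (by rw [this]; exact hRR')
  exact hsph _ hmem (hEq this)

lemma order_ne_top (c₀ : ℂ) {R R' : ℝ} (hR : 0 < R) (hRR' : R < R') {g : ℂ → ℂ}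
    (hg : DifferentiableOn ℂ g (ball c₀ R')) (hsph : ∀ z ∈ sphere c₀ R, g z ≠ 0)
    {w : ℂ} (hw : w ∈ ball c₀ R') (hA : AnalyticAt ℂ g w) : hA.order ≠ ⊤ := by
  intro htop
  have hev : ∀ᶠ z in 𝓝 w, g z = 0 := hA.order_eq_top_iff.mp htop
  have hfreq : ∃ᶠ z in 𝓝[≠] w, g z = 0 := (hev.filter_mono nhdsWithin_le_nhds).frequently
  exact not_eqOn_zero c₀ hR hRR' hsph
    ((hg.analyticOnNhd isOpen_ball).eqOn_zero_of_preconnected_of_frequently_eq_zero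
      (convex_ball c₀ R').isPreconnected hw hfreq)

lemma zset_finite (c₀ : ℂ) {R R' : ℝ} (hR : 0 < R) (hRR' : R < R') {g : ℂ → ℂ}
    (hg : DifferentiableOn ℂ g (ball c₀ R')) (hsph : ∀ z ∈ sphere c₀ R, g z ≠ 0) :
    (Zset c₀ R g).Finite := by
  by_contra hinf
  obtain ⟨z, hzK, hacc⟩ := ((show (Zset c₀ R g).Infinite from hinf).exists_accPt_of_subset_isCompact
    (isCompact_closedBall c₀ R) (fun z hz => hz.1))
  have hfreq : ∃ᶠ y in 𝓝[≠] z, g y = 0 := by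
    have h1 := accPt_iff_frequently.mp hacc
    rw [frequently_nhdsWithin_iff]
    exact h1.mono fun y hy => ⟨hy.2.2, Set.mem_compl_singleton_iff.mpr hy.1⟩
  have hzV : z ∈ ball c₀ R' := closedBall_subset_ball hRR' hzK
  exact not_eqOn_zero c₀ hR hRR' hsph
    ((hg.analyticOnNhd isOpen_ball).eqOn_zero_of_preconnected_of_frequently_eq_zero
      (convex_ball c₀ R').isPreconnected hzV hfreq)

lemma order_eq_zero_of_ne {g : ℂ → ℂ} {z : ℂ} (hA : AnalyticAt ℂ g z) (hz : g z ≠ 0) :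
    hA.order = 0 := by
  rw [show (0 : ℕ∞) = (0 : ℕ) from rfl, hA.order_eq_nat_iff]
  exact ⟨g, hA, hz, by filter_upwards with u; simp⟩

lemma order_ne_zero_of_eq {g : ℂ → ℂ} {z : ℂ} (hA : AnalyticAt ℂ g z) (hz : g z = 0) :
    hA.order ≠ 0 := by
  intro h0
  rw [show (0 : ℕ∞) = (0 : ℕ) from rfl, hA.order_eq_nat_iff] at h0
  obtain ⟨φ, hφ, hφ0, hev⟩ := h0
  have := hev.self_of_nhds
  simp only [pow_zero, one_smul] at this
  exact hφ0 (by rw [← this, hz])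

lemma orderAux1 {g g₁ : ℂ → ℂ} {z w : ℂ} (hg : AnalyticAt ℂ g z) (hg₁ : AnalyticAt ℂ g₁ z)
    (hfac : ∀ u, g u = (u - w) * g₁ u) (hzw : z ≠ w) : hg.order = hg₁.order := by
  rcases eq_or_ne hg₁.order ⊤ with htop | hne
  · rw [htop, hg.order_eq_top_iff]
    filter_upwards [hg₁.order_eq_top_iff.mp htop] with u hu
    rw [hfac u, hu, mul_zero]
  · obtain ⟨n, hn⟩ := WithTop.ne_top_iff_exists.mp hne
    obtain ⟨φ, hφ, hφ0, hev⟩ := hg₁.order_eq_nat_iff n |>.mp hn.symm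
    rw [← hn]
    refine (hg.order_eq_nat_iff n).mpr ⟨fun u => (u - w) * φ u,
      (analyticAt_id.sub analyticAt_const).mul hφ,
      mul_ne_zero (sub_ne_zero.mpr hzw) hφ0, ?_⟩
    filter_upwards [hev] with u hu
    rw [hfac u, hu]
    simp only [smul_eq_mul]; ring

lemma orderAux2 {g g₁ : ℂ → ℂ} {w : ℂ} (hg : AnalyticAt ℂ g w) (hg₁ : AnalyticAt ℂ g₁ w)
    (hfac : ∀ u, g u = (u - w) * g₁ u) : hg.order = hg₁.order + 1 := by
  rcases eq_or_ne hg₁.order ⊤ with htop | hne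
  · rw [htop, show (⊤ : ℕ∞) + 1 = ⊤ from rfl, hg.order_eq_top_iff]
    filter_upwards [hg₁.order_eq_top_iff.mp htop] with u hu
    rw [hfac u, hu, mul_zero]
  · obtain ⟨n, hn⟩ := WithTop.ne_top_iff_exists.mp hne
    obtain ⟨φ, hφ, hφ0, hev⟩ := hg₁.order_eq_nat_iff n |>.mp hn.symm
    have : hg.order = ((n + 1 : ℕ) : ℕ∞) := by
      refine (hg.order_eq_nat_iff (n+1)).mpr ⟨φ, hφ, hφ0, ?_⟩
      filter_upwards [hev] with u hu
      rw [hfac u, hu]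
      simp only [smul_eq_mul]; ring
    rw [this, ← hn]
    push_cast
    rfl

lemma ord_ge_one (c₀ : ℂ) {R R' : ℝ} (hR : 0 < R) (hRR' : R < R') {g : ℂ → ℂ}
    (hg : DifferentiableOn ℂ g (ball c₀ R')) (hsph : ∀ z ∈ sphere c₀ R, g z ≠ 0)
    {z : ℂ} (hz : z ∈ closedBall c₀ R) (h0 : g z = 0) : 1 ≤ ordN g z := by
  have hzV : z ∈ ball c₀ R' := closedBall_subset_ball hRR' hz
  have hA : AnalyticAt ℂ g z := (hg.analyticOnNhd isOpen_ball) z hzV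
  have hnt := order_ne_top c₀ hR hRR' hg hsph hzV hA
  have hnz := order_ne_zero_of_eq hA h0
  simp only [ordN, dif_pos hA]
  have : hA.order.toNat ≠ 0 := by
    intro h
    rcases ENat.toNat_eq_zero.mp h with h' | h'
    · exact hnz h'
    · exact hnt h'
  omega

lemma factor_aux (c₀ : ℂ) {R R' : ℝ} (hR : 0 < R) (hRR' : R < R') :
    ∀ (n : ℕ) (g : ℂ → ℂ) (hg : DifferentiableOn ℂ g (ball c₀ R'))
      (hsph : ∀ z ∈ sphere c₀ R, g z ≠ 0) (hfin : (Zset c₀ R g).Finite),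
      hfin.toFinset.sum (ordN g) ≤ n →
      ∃ (l : List ℂ) (h : ℂ → ℂ), (∀ w ∈ l, w ∈ ball c₀ R) ∧
        DifferentiableOn ℂ h (ball c₀ R') ∧ (∀ z ∈ closedBall c₀ R, h z ≠ 0) ∧
        (∀ z, g z = (l.map (fun w => z - w)).prod * h z) ∧ l.length ≤ n := by
  intro n
  induction n with
  | zero =>
      intro g hg hsph hfin hsum
      have hempty : ∀ z ∈ closedBall c₀ R, g z ≠ 0 := by
        intro z hz h0
        have hzZ : z ∈ hfin.toFinset := by
          rw [Set.Finite.mem_toFinset]; exact ⟨hz, h0⟩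
        have h1 := ord_ge_one c₀ hR hRR' hg hsph hz h0
        have h2 := Finset.single_le_sum (f := ordN g) (fun i _ => Nat.zero_le _) hzZ
        have h3 : (1:ℕ) ≤ 0 := le_trans (le_trans h1 h2) hsum
        omega
      exact ⟨[], g, by simp, hg, hempty, fun z => by simp, by simp⟩
  | succ n ih =>
      intro g hg hsph hfin hsum
      rcases Set.eq_empty_or_nonempty (Zset c₀ R g) with hZ | ⟨w, hwZ⟩
      · refine ⟨[], g, by simp, hg, ?_, fun z => by simp, by simp⟩
        intro z hz h0
        rw [Set.eq_empty_iff_forall_notMem] at hZ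
        exact hZ z ⟨hz, h0⟩
      · obtain ⟨hwcb, hgw⟩ := hwZ
        have hsub : closedBall c₀ R ⊆ ball c₀ R' := closedBall_subset_ball hRR'
        have hwV : w ∈ ball c₀ R' := hsub hwcb
        have hw_ball : w ∈ ball c₀ R := by
          rcases lt_or_eq_of_le (mem_closedBall.mp hwcb) with h | h
          · exact mem_ball.mpr h
          · exact absurd hgw (hsph w (mem_sphere.mpr h))
        set g₁ : ℂ → ℂ := dslope g w with hg₁def
        have hg₁ : DifferentiableOn ℂ g₁ (ball c₀ R') :=
          (Complex.differentiableOn_dslope (isOpen_ball.mem_nhds hwV)).mpr hg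
        have fac1 : ∀ u, g u = (u - w) * g₁ u := by
          intro u
          have h1 := sub_smul_dslope g w u
          rw [smul_eq_mul, hgw, sub_zero] at h1
          exact h1.symm
        have hsph₁ : ∀ z ∈ sphere c₀ R, g₁ z ≠ 0 := by
          intro z hz h0
          exact hsph z hz (by rw [fac1 z, h0, mul_zero])
        have hfin₁ : (Zset c₀ R g₁).Finite := zset_finite c₀ hR hRR' hg₁ hsph₁
        have hAna : AnalyticOnNhd ℂ g (ball c₀ R') := hg.analyticOnNhd isOpen_ball
        have hAna₁ : AnalyticOnNhd ℂ g₁ (ball c₀ R') := hg₁.analyticOnNhd isOpen_ball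
        have hsum₁ : hfin₁.toFinset.sum (ordN g₁) ≤ n := by
          have hsubset : hfin₁.toFinset ⊆ hfin.toFinset := by
            intro z hz
            rw [Set.Finite.mem_toFinset] at hz ⊢
            exact ⟨hz.1, by rw [fac1 z, hz.2, mul_zero]⟩
          have h1 : hfin₁.toFinset.sum (ordN g₁) = hfin.toFinset.sum (ordN g₁) := by
            refine (Finset.sum_subset hsubset ?_)
            intro z hzS hznS
            rw [Set.Finite.mem_toFinset] at hzS
            have hz1 : g₁ z ≠ 0 := fun h0 => by
              rw [Set.Finite.mem_toFinset] at hznS; exact hznS ⟨hzS.1, h0⟩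
            simp only [ordN, dif_pos (hAna₁ z (hsub hzS.1)),
              order_eq_zero_of_ne (hAna₁ z (hsub hzS.1)) hz1]
            rfl
          have hwS : w ∈ hfin.toFinset := by
            rw [Set.Finite.mem_toFinset]; exact ⟨hwcb, hgw⟩
          have h2 : ∀ z ∈ hfin.toFinset.erase w, ordN g₁ z = ordN g z := by
            intro z hz
            obtain ⟨hzw, hzS⟩ := Finset.mem_erase.mp hz
            rw [Set.Finite.mem_toFinset] at hzS
            have hAz : AnalyticAt ℂ g z := hAna z (hsub hzS.1)
            have hAz₁ : AnalyticAt ℂ g₁ z := hAna₁ z (hsub hzS.1)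
            simp only [ordN, dif_pos hAz, dif_pos hAz₁,
              orderAux1 hAz hAz₁ fac1 hzw]
          have hAw : AnalyticAt ℂ g w := hAna w hwV
          have hAw₁ : AnalyticAt ℂ g₁ w := hAna₁ w hwV
          have h3 : ordN g w = ordN g₁ w + 1 := by
            have horder := orderAux2 hAw hAw₁ fac1
            have hnt : hAw.order ≠ ⊤ := order_ne_top c₀ hR hRR' hg hsph hwV hAw
            have hnt₁ : hAw₁.order ≠ ⊤ := by
              intro h
              rw [h] at horder
              exact hnt (by rw [horder]; rfl)
            simp only [ordN, dif_pos hAw, dif_pos hAw₁, horder,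
              ENat.toNat_add hnt₁ (by simp : (1:ℕ∞) ≠ ⊤)]
            rfl
          have h4 := Finset.add_sum_erase hfin.toFinset (ordN g) hwS
          have h5 := Finset.add_sum_erase hfin.toFinset (ordN g₁) hwS
          have h6 := Finset.sum_congr rfl h2
          have e1 : hfin.toFinset.sum (ordN g) = ∑ x ∈ hfin.toFinset, ordN g x := rfl
          have e2 : hfin.toFinset.sum (ordN g₁) = ∑ x ∈ hfin.toFinset, ordN g₁ x := rfl
          have e3 : (hfin.toFinset.erase w).sum (ordN g)
              = ∑ x ∈ hfin.toFinset.erase w, ordN g x := rfl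
          have e4 : (hfin.toFinset.erase w).sum (ordN g₁)
              = ∑ x ∈ hfin.toFinset.erase w, ordN g₁ x := rfl
          have e5 : hfin₁.toFinset.sum (ordN g₁) = ∑ x ∈ hfin₁.toFinset, ordN g₁ x := rfl
          omega
        obtain ⟨l₁, h, hl₁, hh, hh0, hfac₁, hlen⟩ := ih g₁ hg₁ hsph₁ hfin₁ hsum₁
        refine ⟨w :: l₁, h, ?_, hh, hh0, ?_, by simpa using hlen⟩
        · intro v hv
          rcases List.mem_cons.mp hv with rfl | hv
          · exact hw_ball
          · exact hl₁ v hv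
        · intro z
          rw [fac1 z, hfac₁ z]
          simp only [List.map_cons, List.prod_cons]
          ring

lemma factor (c₀ : ℂ) {R R' : ℝ} (hR : 0 < R) (hRR' : R < R') (g : ℂ → ℂ)
    (hg : DifferentiableOn ℂ g (ball c₀ R')) (hsph : ∀ z ∈ sphere c₀ R, g z ≠ 0) :
    ∃ (l : List ℂ) (h : ℂ → ℂ), (∀ w ∈ l, w ∈ ball c₀ R) ∧
      DifferentiableOn ℂ h (ball c₀ R') ∧ (∀ z ∈ closedBall c₀ R, h z ≠ 0) ∧
      (∀ z, g z = (l.map (fun w => z - w)).prod * h z) := by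
  have hfin := zset_finite c₀ hR hRR' hg hsph
  obtain ⟨l, h, h1, h2, h3, h4, _⟩ :=
    factor_aux c₀ hR hRR' (hfin.toFinset.sum (ordN g)) g hg hsph hfin le_rfl
  exact ⟨l, h, h1, h2, h3, h4⟩

/-- The contour-integral formula (6) of the paper's Theorem 3.1 coincides with the
classical implicit solution `u(x,t) = u₀(X)`, `X = x - t·c(u(x,t))`. -/
theorem explicit_formula_equals_implicit_solution
    (x₀ : ℝ) (R : ℝ) (hR : 0 < R)
    (u₀ : ℂ → ℂ) (U : Set ℂ) (hU : IsOpen U)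
    (hUc : closedBall (x₀ : ℂ) R ⊆ U) (hu₀ : DifferentiableOn ℂ u₀ U)
    (c : ℂ → ℂ) (hc : Differentiable ℂ c)
    (x t : ℝ) (hx : |x - x₀| < R)
    (hsep : ∀ z : ℂ, ‖z - (x₀ : ℂ)‖ = R →
      ‖(t : ℂ) * c (u₀ z)‖ < ‖z - (x : ℂ)‖) :
    (∃! X : ℂ, X ∈ ball (x₀ : ℂ) R ∧ X = (x : ℂ) - (t : ℂ) * c (u₀ X)) ∧
    (∀ X : ℂ, X ∈ ball (x₀ : ℂ) R → X = (x : ℂ) - (t : ℂ) * c (u₀ X) →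
      1 + (t : ℂ) * deriv c (u₀ X) * deriv u₀ X ≠ 0 →
      (1 / (2 * Real.pi * Complex.I)) *
        (∮ z in C((x₀ : ℂ), R),
          (1 + (t : ℂ) * deriv c (u₀ z) * deriv u₀ z) * u₀ z /
            (z - (x : ℂ) + (t : ℂ) * c (u₀ z))) = u₀ X) := by
  -- choose a slightly larger ball inside U
  obtain ⟨δ, hδ, hthick⟩ :=
    (isCompact_closedBall (x₀ : ℂ) R).exists_cthickening_subset_open hU hUc
  set R' : ℝ := δ + R with hR'def
  have hRR' : R < R' := by simp [hR'def]; linarith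
  have hcbU : closedBall (x₀ : ℂ) R' ⊆ U := by
    rw [← cthickening_closedBall hδ.le hR.le (x₀ : ℂ)]
    exact hthick
  set V : Set ℂ := ball (x₀ : ℂ) R' with hVdef
  have hVU : V ⊆ U := ball_subset_closedBall.trans hcbU
  have hcbV : closedBall (x₀ : ℂ) R ⊆ V := closedBall_subset_ball hRR'
  have hsphU : sphere (x₀ : ℂ) R ⊆ U := sphere_subset_closedBall.trans hUc
  -- the perturbation e and its derivative
  set e : ℂ → ℂ := fun z => (t : ℂ) * c (u₀ z) with hedef
  have he : DifferentiableOn ℂ e U := (hc.comp_differentiableOn hu₀).const_mul (t : ℂ)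
  have heAt : ∀ z ∈ V, DifferentiableAt ℂ e z :=
    fun z hz => he.differentiableAt (hU.mem_nhds (hVU hz))
  set de : ℂ → ℂ := deriv e with hdedef
  have hdeU : DifferentiableOn ℂ de U := ((he.analyticOnNhd hU).deriv).differentiableOn
  have hdecont : ContinuousOn de U := hdeU.continuousOn
  have hesph : ∀ z ∈ sphere (x₀ : ℂ) R, ‖e z‖ < ‖z - (x : ℂ)‖ := by
    intro z hz
    exact hsep z (by rw [← Complex.dist_eq]; exact mem_sphere.mp hz)
  have hxball : (x : ℂ) ∈ ball (x₀ : ℂ) R := by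
    rw [mem_ball, Complex.dist_eq]
    rw [show (x : ℂ) - (x₀ : ℂ) = ((x - x₀ : ℝ) : ℂ) by push_cast; ring, Complex.norm_real, Real.norm_eq_abs]
    exact hx
  -- homotopy parameter
  set σ : ℝ → ℝ := fun s => max 0 (min 1 s) with hσdef
  have hσcont : Continuous σ := continuous_const.max (continuous_const.min continuous_id)
  have hσ01 : ∀ s, 0 ≤ σ s ∧ σ s ≤ 1 :=
    fun s => ⟨le_max_left _ _, max_le zero_le_one (min_le_left _ _)⟩
  have hσ0 : σ 0 = 0 := by norm_num [hσdef]
  have hσ1 : σ 1 = 1 := by norm_num [hσdef]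
  set G : ℝ → ℂ → ℂ := fun s z => z - (x : ℂ) + (σ s : ℂ) * e z with hGdef
  have hGdiff : ∀ s, DifferentiableOn ℂ (G s) V :=
    fun s => (differentiableOn_id.sub_const _).add ((he.mono hVU).const_mul _)
  have hGsph : ∀ (s : ℝ) (z : ℂ), z ∈ sphere (x₀ : ℂ) R → G s z ≠ 0 := by
    intro s z hz h0
    have h1 : ‖(σ s : ℂ) * e z‖ ≤ ‖e z‖ := by
      rw [norm_mul, Complex.norm_real, Real.norm_eq_abs, _root_.abs_of_nonneg (hσ01 s).1]
      nlinarith [(hσ01 s).2, norm_nonneg (e z)]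
    have h2 : z - (x : ℂ) = -((σ s : ℂ) * e z) := by linear_combination h0
    have h3 := hesph z hz
    rw [h2, norm_neg] at h3
    linarith
  have hGderiv : ∀ (s : ℝ), ∀ z ∈ V, deriv (G s) z = 1 + (σ s : ℂ) * de z := by
    intro s z hz
    have h1 : DifferentiableAt ℂ (fun z : ℂ => z - (x : ℂ)) z :=
      differentiableAt_fun_id.sub_const _
    have h2 : DifferentiableAt ℂ (fun z => (σ s : ℂ) * e z) z := (heAt z hz).const_mul _
    rw [hGdef]
    rw [deriv_fun_add h1 h2, deriv_sub_const, deriv_id'', deriv_const_mul _ (heAt z hz)]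
  -- the key integral computation
  have key : ∀ (g q : ℂ → ℂ), DifferentiableOn ℂ q V → ∀ (l : List ℂ) (hh : ℂ → ℂ),
      (∀ w ∈ l, w ∈ ball (x₀ : ℂ) R) → DifferentiableOn ℂ hh V →
      (∀ z ∈ closedBall (x₀ : ℂ) R, hh z ≠ 0) →
      (∀ z, g z = (l.map (fun w => z - w)).prod * hh z) →
      (∮ z in C((x₀ : ℂ), R), deriv g z * q z / g z)
        = (2 * Real.pi * I) * (l.map q).sum := by
    intro g q hq l hh hl hhdiff hh0 hfac
    have hgeq : g = fun z => (l.map (fun w => z - w)).prod * hh z := funext hfac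
    rw [hgeq]
    exact keyInt (x₀ : ℂ) R R' hR hRR' hh q hhdiff hq hh0 l hl
  -- the homotopy integral
  set J : ℝ → ℂ := fun s => ∮ z in C((x₀ : ℂ), R),
      (1 + (σ s : ℂ) * de z) / (G s z) with hJdef
  have hJrel : ∀ s, J s = ∮ z in C((x₀ : ℂ), R), deriv (G s) z * (fun _ => (1:ℂ)) z / (G s z) := by
    intro s
    refine circleIntegral.integral_congr hR.le ?_
    intro z hz
    have hzV : z ∈ V := hcbV (sphere_subset_closedBall hz)
    simp only [hGderiv s z hzV, mul_one]
  have hJs : ∀ s, ∃ N : ℕ, J s = (2 * Real.pi * I) * N := by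
    intro s
    obtain ⟨l, hh, p1, p2, p3, p4⟩ := factor (x₀ : ℂ) hR hRR' (G s) (hGdiff s) (hGsph s)
    refine ⟨l.length, ?_⟩
    rw [hJrel s, key (G s) _ (differentiableOn_const 1) l hh p1 p2 p3 p4]
    congr 1
    induction l with
    | nil => simp
    | cons a L ihl => simp [ihl]; push_cast; ring
  have hJ0 : J 0 = (2 * Real.pi * I) := by
    have : J 0 = ∮ z in C((x₀ : ℂ), R), (z - (x : ℂ))⁻¹ := by
      refine circleIntegral.integral_congr hR.le ?_
      intro z hz
      simp only [hJdef, hGdef, hσ0]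
      push_cast
      rw [zero_mul, add_zero, zero_mul, add_zero, div_eq_mul_inv, one_mul]
    rw [this, circleIntegral.integral_sub_inv_of_mem_ball hxball]
  -- continuity of J
  have hJcont : Continuous J := by
    have : J = fun s => ∫ θ in (0:ℝ)..(2 * Real.pi),
        (fun s θ => deriv (circleMap (x₀:ℂ) R) θ •
          ((1 + (σ s : ℂ) * de (circleMap (x₀:ℂ) R θ)) / (G s (circleMap (x₀:ℂ) R θ)))) s θ := rfl
    rw [this]
    apply intervalIntegral.continuous_parametric_intervalIntegral_of_continuous'
    have hmapcont : Continuous fun p : ℝ × ℝ => circleMap (x₀:ℂ) R p.2 :=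
      (continuous_circleMap _ _).comp continuous_snd
    have hmapU : ∀ p : ℝ × ℝ, circleMap (x₀:ℂ) R p.2 ∈ U :=
      fun p => hsphU (circleMap_mem_sphere _ hR.le _)
    have hσC : Continuous fun p : ℝ × ℝ => ((σ p.1 : ℝ) : ℂ) :=
      Complex.continuous_ofReal.comp (hσcont.comp continuous_fst)
    have hdenom : Continuous fun p : ℝ × ℝ => G p.1 (circleMap (x₀:ℂ) R p.2) := by
      simp only [hGdef]
      exact (hmapcont.sub continuous_const).add
        (hσC.mul ((he.continuousOn.comp_continuous hmapcont hmapU)))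
    have hnum : Continuous fun p : ℝ × ℝ =>
        1 + ((σ p.1 : ℝ) : ℂ) * de (circleMap (x₀:ℂ) R p.2) :=
      continuous_const.add (hσC.mul ((hdecont.comp_continuous hmapcont hmapU)))
    have hdcm : Continuous fun p : ℝ × ℝ => deriv (circleMap (x₀:ℂ) R) p.2 := by
      simp only [deriv_circleMap]
      exact ((continuous_circleMap _ _).comp continuous_snd).mul continuous_const
    exact hdcm.smul (hnum.div hdenom
      (fun p => hGsph p.1 _ (circleMap_mem_sphere _ hR.le _)))
  -- J is constant
  have hJ1 : J 1 = 2 * Real.pi * I := by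
    have hA : IsClopen (J ⁻¹' {J 0}) := by
      constructor
      · exact IsClosed.preimage hJcont isClosed_singleton
      · rw [Metric.isOpen_iff]
        intro s hs
        have hca : ContinuousAt J s := hJcont.continuousAt
        rcases Metric.continuousAt_iff.mp hca 1 one_pos with ⟨ε, hε, hball⟩
        refine ⟨ε, hε, ?_⟩
        intro s' hs'
        have hd := hball hs'
        obtain ⟨N', hN'⟩ := hJs s'
        obtain ⟨N, hN⟩ := hJs s
        have hsmem : J s = J 0 := hs
        have heq : N' = N := by
          by_contra hne
          have hzne : ((N' : ℤ)) ≠ (N : ℤ) := by exact_mod_cast hne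
          have h1i : (1:ℤ) ≤ |(N' : ℤ) - (N : ℤ)| := Int.one_le_abs (sub_ne_zero.mpr hzne)
          have h1 : (1:ℝ) ≤ |(N' : ℝ) - (N : ℝ)| := by exact_mod_cast h1i
          have h2 : dist (J s') (J s) = 2 * Real.pi * |(N' : ℝ) - (N : ℝ)| := by
            rw [Complex.dist_eq, hN', hN, ← mul_sub]
            rw [show (N' : ℂ) - (N : ℂ) = (((N' : ℝ) - (N : ℝ) : ℝ) : ℂ) by push_cast; ring]
            simp only [norm_mul, Complex.norm_real, Real.norm_eq_abs, Complex.norm_I, mul_one,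
              Complex.norm_ofNat]
            rw [_root_.abs_of_pos Real.pi_pos]
          rw [h2] at hd
          nlinarith [Real.pi_gt_three]
        rw [Set.mem_preimage, Set.mem_singleton_iff, ← hsmem, hN, hN', heq]
    have huniv : J ⁻¹' {J 0} = Set.univ :=
      hA.eq_univ ⟨0, rfl⟩
    have h1mem : (1:ℝ) ∈ J ⁻¹' {J 0} := by rw [huniv]; trivial
    rw [Set.mem_preimage, Set.mem_singleton_iff] at h1mem
    rw [h1mem, hJ0]
  -- factor F := G 1
  obtain ⟨l, hh, hlball, hhdiff, hh0, hfac⟩ :=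
    factor (x₀ : ℂ) hR hRR' (G 1) (hGdiff 1) (hGsph 1)
  have hG1 : ∀ z, G 1 z = z - (x : ℂ) + e z := by
    intro z; simp [hGdef, hσ1]
  have hlen : l.length = 1 := by
    have h1 : J 1 = (2 * Real.pi * I) * l.length := by
      rw [hJrel 1, key (G 1) _ (differentiableOn_const 1) l hh hlball hhdiff hh0 hfac]
      congr 1
      induction l with
      | nil => simp
      | cons a L ihl => simp [ihl]; push_cast; ring
    rw [hJ1] at h1
    have h2πI : (2 * Real.pi * I : ℂ) ≠ 0 := by
      simp [Real.pi_ne_zero, I_ne_zero]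
    have h2 : (2 * Real.pi * I : ℂ) * 1 = (2 * Real.pi * I) * l.length := by
      rw [mul_one]; exact h1
    have h3 := mul_left_cancel₀ h2πI h2
    exact_mod_cast h3.symm
  obtain ⟨X, hlX⟩ := List.length_eq_one_iff.mp hlen
  have hfacX : ∀ z, G 1 z = (z - X) * hh z := by
    intro z
    rw [hfac z, hlX]
    simp
  have hXball : X ∈ ball (x₀ : ℂ) R := by
    rw [hlX] at hlball
    exact hlball X (by simp)
  have hFX : G 1 X = 0 := by rw [hfacX X]; ring
  have hXfix : X = (x : ℂ) - (t : ℂ) * c (u₀ X) := by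
    have h0 := hFX
    rw [hG1 X] at h0
    simp only [hedef] at h0
    linear_combination h0
  have huniq : ∀ X' ∈ ball (x₀ : ℂ) R, X' = (x : ℂ) - (t : ℂ) * c (u₀ X') → X' = X := by
    intro X' hX' hfix
    have h0 : G 1 X' = 0 := by
      rw [hG1 X']
      simp only [hedef]
      linear_combination hfix
    rw [hfacX X'] at h0
    rcases mul_eq_zero.mp h0 with h | h
    · exact sub_eq_zero.mp h
    · exact absurd h (hh0 X' (ball_subset_closedBall hX'))
  constructor
  · exact ⟨X, ⟨hXball, hXfix⟩, fun Y hY => huniq Y hY.1 hY.2⟩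
  · intro X' hX'ball hX'fix _
    have hXX' : X' = X := huniq X' hX'ball hX'fix
    have hderivF : ∀ z ∈ V, deriv (G 1) z
        = 1 + (t : ℂ) * deriv c (u₀ z) * deriv u₀ z := by
      intro z hz
      have hdez : de z = (t : ℂ) * (deriv c (u₀ z) * deriv u₀ z) := by
        rw [hdedef, hedef]
        have hdu : DifferentiableAt ℂ u₀ z := hu₀.differentiableAt (hU.mem_nhds (hVU hz))
        have hcu : DifferentiableAt ℂ (fun z => c (u₀ z)) z := hc.differentiableAt.comp z hdu
        rw [deriv_const_mul _ hcu]
        congr 1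
        exact deriv_comp z hc.differentiableAt hdu
      rw [hGderiv 1 z hz, hσ1, hdez]
      push_cast
      ring
    have hint : (∮ z in C((x₀ : ℂ), R),
        (1 + (t : ℂ) * deriv c (u₀ z) * deriv u₀ z) * u₀ z /
          (z - (x : ℂ) + (t : ℂ) * c (u₀ z)))
        = (2 * Real.pi * I) * ((l.map u₀).sum) := by
      rw [← key (G 1) u₀ (hu₀.mono hVU) l hh hlball hhdiff hh0 hfac]
      refine circleIntegral.integral_congr hR.le ?_
      intro z hz
      have hzV : z ∈ V := hcbV (sphere_subset_closedBall hz)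
      beta_reduce
      rw [hderivF z hzV]
      simp only [hGdef, hσ1, hedef, Complex.ofReal_one, one_mul]
    rw [hint, hlX, hXX']
    simp only [List.map_cons, List.map_nil, List.sum_cons, List.sum_nil, add_zero]
    have h2πI : (2 * (Real.pi:ℂ) * I : ℂ) ≠ 0 := by
      simp [Real.pi_ne_zero, I_ne_zero]
    field_simp
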